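/- arXiv:1705.07611 — 4 statements merged into one kernel-verified Lean document; each statement's English description precedes it below -/
import Mathlib

section
/- The Laguerre polynomials are orthogonal with respect to the weight e^{-t} on (0,\infty): for m \neq n, \int_0^\infty e^{-t} L_m(t) L_n(t) dt = 0, and \int_0^\infty e^{-t} L_n(t)^2 dt = 1. -/
open Real MeasureTheory

/-- The `n`-th Laguerre polynomial `L_n(t) = ∑_{k=0}^n C(n,k) (-t)^k / k!`. -/
noncomputable def laguerre (n : ℕ) (t : ℝ) : ℝ :=
  ∑ k ∈ Finset.range (n + 1), (n.choose k : ℝ) * (-t) ^ k / (Nat.factorial k : ℝ)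

/-!
Since `∫₀^∞ e^{-t} t^k dt = k!`, expanding `L_m L_n` turns the integral into the double sum
`∑_{j,k} (-1)^{j+k} C(m,j) C(n,k) C(j+k,j)`. Vandermonde's identity
`C(j+k,j) = ∑_a C(j,a) C(k,a)` factors it as `∑_a S_m(a) S_n(a)` with
`S_m(a) = ∑_j (-1)^j C(m,j) C(j,a) = (-1)^m δ_{ma}`, which is `(-1)^m` times the `m`-th forward
difference of `x ↦ C(x,a)` at `0`.
-/

open Finset Nat

theorem neg_one_pow_mul_neg_one_pow_sub {R : Type*} [Monoid R] [HasDistribNeg R] {j m : ℕ}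
    (h : j ≤ m) : (-1 : R) ^ m * (-1) ^ (m - j) = (-1) ^ j := by
  obtain ⟨d, rfl⟩ := Nat.exists_eq_add_of_le h
  rw [Nat.add_sub_cancel_left, pow_add, mul_assoc, ← pow_add, Even.neg_one_pow ⟨d, rfl⟩, mul_one]

theorem Int.alternating_sum_range_choose_mul_choose (m a : ℕ) :
    ∑ j ∈ Finset.range (m + 1), (-1 : ℤ) ^ j * m.choose j * j.choose a =
      if m = a then (-1) ^ m else 0 := by
  have h := fwdDiff_iter_eq_sum_shift 1 (fun x ↦ x.choose a : ℕ → ℤ) m 0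
  rw [fwdDiff_iter_choose_zero] at h
  have := congrArg ((-1 : ℤ) ^ m * ·) h
  simp only [mul_ite, mul_one, mul_zero, mul_sum, smul_eq_mul, zero_add] at this
  rw [this]
  refine sum_congr rfl fun j hj ↦ ?_
  rw [← mul_assoc, ← mul_assoc, neg_one_pow_mul_neg_one_pow_sub (mem_range_succ_iff.mp hj)]

theorem Nat.add_choose_eq_sum_choose_mul_choose {j N : ℕ} (k : ℕ) (hj : j ≤ N) :
    (j + k).choose j = ∑ a ∈ Finset.range (N + 1), j.choose a * k.choose a := by
  have hvanish : ∀ a ∈ range (N + 1), a ∉ range (j + 1) → j.choose a * k.choose a = 0 :=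
    fun a _ ha ↦ by rw [choose_eq_zero_of_lt (by simpa using ha), zero_mul]
  rw [← sum_subset (range_subset_range.mpr (by omega)) hvanish, add_choose_eq,
    sum_antidiagonal_eq_sum_range_succ (fun a b ↦ j.choose a * k.choose b), ← sum_range_reflect]
  refine sum_congr rfl fun a ha ↦ ?_
  have ha : a ≤ j := mem_range_succ_iff.mp ha
  rw [succ_sub_one, choose_symm ha, Nat.sub_sub_self ha]

theorem Int.alternating_double_sum_choose_mul_add_choose (m n : ℕ) :
    ∑ j ∈ Finset.range (m + 1), ∑ k ∈ Finset.range (n + 1),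
      (-1 : ℤ) ^ j * m.choose j * ((-1) ^ k * n.choose k) * (j + k).choose j =
      if m = n then 1 else 0 := by
  calc _ = ∑ j ∈ Finset.range (m + 1), ∑ k ∈ Finset.range (n + 1), ∑ a ∈ Finset.range (m + 1),
          (-1 : ℤ) ^ j * m.choose j * j.choose a * ((-1) ^ k * n.choose k * k.choose a) := by
        refine sum_congr rfl fun j hj ↦ sum_congr rfl fun k _ ↦ ?_
        rw [add_choose_eq_sum_choose_mul_choose k (mem_range_succ_iff.mp hj)]
        push_cast
        rw [mul_sum]
        exact sum_congr rfl fun a _ ↦ by ring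
    _ = ∑ a ∈ Finset.range (m + 1),
          (∑ j ∈ Finset.range (m + 1), (-1 : ℤ) ^ j * m.choose j * j.choose a) *
            ∑ k ∈ Finset.range (n + 1), (-1 : ℤ) ^ k * n.choose k * k.choose a := by
        simp only [sum_mul_sum]
        conv_lhs => arg 2; ext j; rw [sum_comm]
        exact sum_comm
    _ = ∑ a ∈ Finset.range (m + 1), if m = a then (if m = n then 1 else 0) else 0 := by
        refine sum_congr rfl fun a _ ↦ ?_
        simp only [alternating_sum_range_choose_mul_choose]
        split_ifs <;> simp_all [← pow_add, ← two_mul, pow_mul]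
    _ = if m = n then 1 else 0 := by simp

theorem integral_exp_neg_mul_pow (k : ℕ) :
    ∫ t in Set.Ioi (0 : ℝ), exp (-t) * t ^ k = k ! := by
  rw [← Real.Gamma_nat_eq_factorial, Real.Gamma_eq_integral (by positivity)]
  refine setIntegral_congr_fun measurableSet_Ioi fun t _ ↦ ?_
  rw [add_sub_cancel_right, rpow_natCast]

theorem integrableOn_exp_neg_mul_pow (k : ℕ) :
    IntegrableOn (fun t : ℝ ↦ exp (-t) * t ^ k) (Set.Ioi 0) := by
  refine (Real.GammaIntegral_convergent (s := k + 1) (by positivity)).congr_fun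
    (fun t _ ↦ ?_) measurableSet_Ioi
  simp only [add_sub_cancel_right, rpow_natCast]

theorem integral_exp_neg_mul_sum_pow {ι : Type*} (s : Finset ι) (c : ι → ℝ) (e : ι → ℕ) :
    ∫ t in Set.Ioi (0 : ℝ), exp (-t) * ∑ i ∈ s, c i * t ^ e i = ∑ i ∈ s, c i * (e i)! := by
  simp_rw [mul_sum, mul_left_comm (exp _)]
  rw [integral_finsetSum _ fun i _ ↦ (integrableOn_exp_neg_mul_pow (e i)).const_mul (c i)]
  simp_rw [integral_const_mul, integral_exp_neg_mul_pow]

theorem laguerre_eq_sum_pow (n : ℕ) (t : ℝ) :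
    laguerre n t = ∑ k ∈ Finset.range (n + 1), (-1) ^ k * n.choose k / k ! * t ^ k :=
  sum_congr rfl fun k _ ↦ by rw [neg_pow]; ring

theorem integral_exp_neg_mul_laguerre_mul_laguerre (m n : ℕ) :
    ∫ t in Set.Ioi (0 : ℝ), exp (-t) * laguerre m t * laguerre n t =
      if m = n then 1 else 0 := by
  simp_rw [mul_assoc, laguerre_eq_sum_pow, sum_mul_sum, ← sum_product',
    mul_mul_mul_comm _ (_ ^ _), ← pow_add]
  rw [integral_exp_neg_mul_sum_pow, sum_product]
  have h := congrArg (Int.cast : ℤ → ℝ) (Int.alternating_double_sum_choose_mul_add_choose m n)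
  push_cast at h
  rw [← h]
  refine sum_congr rfl fun j _ ↦ sum_congr rfl fun k _ ↦ ?_
  rw [← add_choose_mul_factorial_mul_factorial, choose_symm_add]
  push_cast
  field_simp

theorem laguerre_orthonormal :
    (∀ m n : ℕ, m ≠ n →
      ∫ t in Set.Ioi (0 : ℝ), Real.exp (-t) * laguerre m t * laguerre n t = 0) ∧
    (∀ n : ℕ, ∫ t in Set.Ioi (0 : ℝ), Real.exp (-t) * (laguerre n t) ^ 2 = 1) := by
  refine ⟨fun m n hmn ↦ ?_, fun n ↦ ?_⟩
  · rw [integral_exp_neg_mul_laguerre_mul_laguerre, if_neg hmn]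
  · simp_rw [sq, ← mul_assoc]
    rw [integral_exp_neg_mul_laguerre_mul_laguerre, if_pos rfl]
end

section
/- Let \kappa > 0 and let v : [0,\infty) \to \mathbb{R} be twice continuously differentiable with v(0) = v'(0) = 0, with v, v', v'' of at most polynomial growth. Then the Laguerre coefficients of v'' satisfy (v'')_n = \kappa^2 \sum_{m=0}^n (n - m + 1) v_m for every n, where v_n = \int_0^\infty e^{-\kappa t} L_n(\kappa t) v(t) dt. -/
/-!
The Laguerre functions `φₙ(t) = e^{-κt} Lₙ(κt)` satisfy `φₙ' = -κ ∑_{m ≤ n} φₘ`, because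
`Lₙ' = -∑_{m < n} Lₘ`. Integrating by parts against a function `u` with `u 0 = 0` and polynomial
growth (so both boundary terms vanish, the one at infinity because of the factor `e^{-κt}`) gives
`(u')ₙ = κ ∑_{m ≤ n} uₘ`. Applying this to `v'` and then to `v` expresses `(v'')ₙ` as `κ²` times a
double partial sum, which regroups as `∑_{m ≤ n} (n - m + 1) vₘ`.
-/

open Real MeasureTheory Finset

/-- The Laguerre transform coefficients of `v` with scaling parameter `κ`. -/
noncomputable def laguerreCoeff (κ : ℝ) (v : ℝ → ℝ) (n : ℕ) : ℝ :=
  ∫ t in Set.Ioi (0 : ℝ), Real.exp (-κ * t) * laguerre n (κ * t) * v t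

open Filter Topology Asymptotics
open scoped Nat

theorem sum_range_laguerre (n : ℕ) (x : ℝ) :
    ∑ m ∈ range n, laguerre m x = ∑ j ∈ range n, (n.choose (j + 1) : ℝ) * (-x) ^ j / j ! := by
  induction n with
  | zero => simp
  | succ n ih =>
    rw [sum_range_succ, ih, laguerre]
    simp only [Nat.choose_succ_succ', Nat.cast_add, add_mul, add_div, sum_add_distrib]
    simp [sum_range_succ _ n]
    ring

theorem hasDerivAt_laguerre (n : ℕ) (x : ℝ) :
    HasDerivAt (laguerre n) (-∑ m ∈ range n, laguerre m x) x := by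
  have hterm (k : ℕ) : HasDerivAt (fun y ↦ (n.choose k : ℝ) * (-y) ^ k / k !)
      ((n.choose k : ℝ) * (k * (-x) ^ (k - 1) * -1) / k !) x :=
    (((hasDerivAt_neg x).pow k).const_mul _).div_const _
  refine (HasDerivAt.fun_sum fun k _ ↦ hterm k).congr_deriv ?_
  rw [sum_range_laguerre, sum_range_succ', ← sum_neg_distrib]
  -- the `k = 0` term has the factor `(0 : ℝ)`; the others match after the shift `k = j + 1`
  refine (add_eq_left.2 (by simp)).trans (sum_congr rfl fun j _ ↦ ?_)
  rw [Nat.factorial_succ]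
  push_cast
  field_simp

noncomputable def laguerreFun (κ : ℝ) (n : ℕ) (t : ℝ) : ℝ :=
  exp (-κ * t) * laguerre n (κ * t)

theorem laguerreCoeff_eq_integral (κ : ℝ) (v : ℝ → ℝ) (n : ℕ) :
    laguerreCoeff κ v n = ∫ t in Set.Ioi 0, laguerreFun κ n t * v t :=
  rfl

theorem hasDerivAt_laguerreFun (κ : ℝ) (n : ℕ) (t : ℝ) :
    HasDerivAt (laguerreFun κ n) (-κ * ∑ m ∈ range (n + 1), laguerreFun κ m t) t := by
  have hexp : HasDerivAt (fun s ↦ exp (-κ * s)) (exp (-κ * t) * -κ) t := by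
    simpa using ((hasDerivAt_id t).const_mul (-κ)).exp
  have hlag : HasDerivAt (fun s ↦ laguerre n (κ * s)) ((-∑ m ∈ range n, laguerre m (κ * t)) * κ) t :=
    (hasDerivAt_laguerre n (κ * t)).comp t (by simpa using (hasDerivAt_id t).const_mul κ)
  refine (hexp.mul hlag).congr_deriv ?_
  rw [sum_range_succ]
  simp only [laguerreFun, ← mul_sum]
  ring

theorem continuous_laguerreFun (κ : ℝ) (n : ℕ) : Continuous (laguerreFun κ n) :=
  continuous_iff_continuousAt.2 fun t ↦ (hasDerivAt_laguerreFun κ n t).continuousAt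

def HasPolynomialGrowth (u : ℝ → ℝ) : Prop :=
  ∃ C p : ℝ, ∀ t : ℝ, 0 ≤ t → |u t| ≤ C * (1 + t) ^ p

theorem HasPolynomialGrowth.isBigO_exp {u : ℝ → ℝ} (hu : HasPolynomialGrowth u) {b : ℝ}
    (hb : 0 < b) : u =O[atTop] fun t ↦ exp (b * t) := by
  obtain ⟨C, p, hC⟩ := hu
  have hpoly : u =O[atTop] fun t ↦ (1 + t) ^ p := by
    refine IsBigO.of_bound C ?_
    filter_upwards [eventually_ge_atTop 0] with t ht
    rw [Real.norm_eq_abs, Real.norm_eq_abs, abs_of_nonneg (rpow_nonneg (by linarith) p)]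
    exact hC t ht
  have hshift : (fun t ↦ (1 + t) ^ p) =O[atTop] fun t ↦ exp (b * (1 + t)) :=
    (isLittleO_rpow_exp_pos_mul_atTop p hb).isBigO.comp_tendsto
      (tendsto_atTop_add_const_left _ 1 tendsto_id)
  refine hpoly.trans (hshift.trans ((isBigO_refl _ _).const_mul_left (exp b) |>.congr_left ?_))
  intro t
  rw [mul_add, mul_one, exp_add]

theorem isBigO_laguerre_const_mul_exp (n : ℕ) (κ : ℝ) {b : ℝ} (hb : 0 < b) :
    (fun t ↦ laguerre n (κ * t)) =O[atTop] fun t ↦ exp (b * t) := by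
  refine IsBigO.fun_sum fun k _ ↦ ?_
  refine (isLittleO_pow_exp_pos_mul_atTop k hb).isBigO.const_mul_left
    ((n.choose k : ℝ) * (-κ) ^ k / k !) |>.congr_left fun t ↦ ?_
  ring

theorem isBigO_laguerreFun_mul {κ : ℝ} (hκ : 0 < κ) (n : ℕ) {u : ℝ → ℝ}
    (hu : HasPolynomialGrowth u) :
    (fun t ↦ laguerreFun κ n t * u t) =O[atTop] fun t ↦ exp (-(κ / 2) * t) := by
  -- `Lₙ(κ·)` and `u` each cost a factor `e^{κt/4}` against `e^{-κt}`
  have hb : 0 < κ / 4 := by positivity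
  refine ((isBigO_refl (fun t ↦ exp (-κ * t)) atTop).mul
    (isBigO_laguerre_const_mul_exp n κ hb)).mul (hu.isBigO_exp hb) |>.congr (fun t ↦ rfl) ?_
  intro t
  rw [← exp_add, ← exp_add]
  ring_nf

theorem integrableOn_laguerreFun_mul {κ : ℝ} (hκ : 0 < κ) (n : ℕ) {u : ℝ → ℝ}
    (hc : Continuous u) (hu : HasPolynomialGrowth u) (a : ℝ) :
    IntegrableOn (fun t ↦ laguerreFun κ n t * u t) (Set.Ioi a) :=
  integrable_of_isBigO_exp_neg (half_pos hκ) ((continuous_laguerreFun κ n).mul hc).continuousOn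
    (isBigO_laguerreFun_mul hκ n hu)

theorem tendsto_laguerreFun_mul_atTop {κ : ℝ} (hκ : 0 < κ) (n : ℕ) {u : ℝ → ℝ}
    (hu : HasPolynomialGrowth u) :
    Tendsto (fun t ↦ laguerreFun κ n t * u t) atTop (𝓝 0) :=
  (isBigO_laguerreFun_mul hκ n hu).trans_tendsto <|
    tendsto_exp_atBot.comp (tendsto_id.const_mul_atTop_of_neg (by linarith))

theorem laguerreCoeff_deriv {κ : ℝ} (hκ : 0 < κ) {u : ℝ → ℝ} (hu : ContDiff ℝ 1 u)
    (hu0 : u 0 = 0) (hgu : HasPolynomialGrowth u) (hgu' : HasPolynomialGrowth (deriv u))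
    (n : ℕ) :
    laguerreCoeff κ (deriv u) n = κ * ∑ m ∈ range (n + 1), laguerreCoeff κ u m := by
  have hint (m : ℕ) := integrableOn_laguerreFun_mul hκ m hu.continuous hgu 0
  have hsum : (fun t ↦ (-κ * ∑ m ∈ range (n + 1), laguerreFun κ m t) * u t)
      = fun t ↦ -κ * ∑ m ∈ range (n + 1), laguerreFun κ m t * u t := by
    ext t
    rw [mul_assoc, sum_mul]
  have hint_sum : IntegrableOn (fun t ↦ (-κ * ∑ m ∈ range (n + 1), laguerreFun κ m t) * u t)
      (Set.Ioi 0) := by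
    rw [hsum]
    exact (integrable_finsetSum _ fun m _ ↦ hint m).const_mul (-κ)
  have hboundary_zero : Tendsto (fun t ↦ laguerreFun κ n t * u t) (𝓝[>] 0) (𝓝 0) :=
    (((continuous_laguerreFun κ n).mul hu.continuous).tendsto' 0 0 (by simp [hu0])).mono_left
      nhdsWithin_le_nhds
  have hibp := integral_Ioi_mul_deriv_eq_deriv_mul
    (fun t _ ↦ hasDerivAt_laguerreFun κ n t)
    (fun t _ ↦ (hu.differentiable one_ne_zero t).hasDerivAt)
    (integrableOn_laguerreFun_mul hκ n (hu.continuous_deriv le_rfl) hgu' 0) hint_sum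
    hboundary_zero (tendsto_laguerreFun_mul_atTop hκ n hgu)
  rw [laguerreCoeff_eq_integral, hibp, hsum, integral_const_mul,
    integral_finsetSum _ fun m _ ↦ hint m]
  simp [laguerreCoeff_eq_integral]

theorem sum_range_succ_sum_range_succ {R : Type*} [CommRing R] (a : ℕ → R) (n : ℕ) :
    ∑ m ∈ range (n + 1), ∑ j ∈ range (m + 1), a j
      = ∑ j ∈ range (n + 1), ((n : R) - j + 1) * a j := by
  induction n with
  | zero => simp
  | succ n ih =>
    rw [sum_range_succ, ih, sum_range_succ a, sum_range_succ _ (n + 1), ← add_assoc,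
      ← sum_add_distrib]
    push_cast
    congr 1
    · exact sum_congr rfl fun j _ ↦ by ring
    · ring

theorem laguerre_transform_second_deriv (κ : ℝ) (hκ : 0 < κ) (v : ℝ → ℝ)
    (hv : ContDiff ℝ 2 v) (hv0 : v 0 = 0) (hv0' : deriv v 0 = 0)
    (hgrowth : ∃ C p : ℝ, ∀ t : ℝ, 0 ≤ t → |v t| ≤ C * (1 + t) ^ p)
    (hgrowth' : ∃ C p : ℝ, ∀ t : ℝ, 0 ≤ t → |deriv v t| ≤ C * (1 + t) ^ p)
    (hgrowth'' : ∃ C p : ℝ, ∀ t : ℝ, 0 ≤ t → |deriv (deriv v) t| ≤ C * (1 + t) ^ p)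
    (n : ℕ) :
    laguerreCoeff κ (deriv (deriv v)) n
      = κ ^ 2 * ∑ m ∈ Finset.range (n + 1),
          ((n : ℝ) - (m : ℝ) + 1) * laguerreCoeff κ v m := by
  rw [laguerreCoeff_deriv hκ hv.deriv' hv0' hgrowth' hgrowth'' n,
    sum_congr rfl fun m _ ↦ laguerreCoeff_deriv hκ (hv.of_le one_le_two) hv0 hgrowth hgrowth' m,
    ← mul_sum, ← sum_range_succ_sum_range_succ]
  ring
end

section
/- For every natural number n and real t, t^2 L_n(t) = \sum_{k=-2}^{2} \chi_{k,n} L_{n+k}(t), where \chi_{-2,n} = n(n-1), \chi_{-1,n} = -4n^2, \chi_{0,n} = 2(3n^2 + 3n + 1), \chi_{1,n} = -4(n+1)^2, \chi_{2,n} = (n+1)(n+2), and terms with negative index n+k are interpreted as zero. -/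
/-- Laguerre polynomial extended by zero to negative integer indices. -/
noncomputable def laguerreZ (m : ℤ) (t : ℝ) : ℝ :=
  if 0 ≤ m then laguerre m.toNat t else 0

/-- The coefficients `χ_{k,n}` in the identity `t² L_n(t) = ∑_{k=-2}^2 χ_{k,n} L_{n+k}(t)`. -/
def chiCoeff (k : ℤ) (n : ℕ) : ℝ :=
  if k = -2 then (n : ℝ) * ((n : ℝ) - 1)
  else if k = -1 then -4 * (n : ℝ) ^ 2
  else if k = 0 then 2 * (3 * (n : ℝ) ^ 2 + 3 * (n : ℝ) + 1)
  else if k = 1 then -4 * ((n : ℝ) + 1) ^ 2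
  else ((n : ℝ) + 1) * ((n : ℝ) + 2)

open Finset Nat

lemma laguerre_eq_sum_range {n N : ℕ} (h : n < N) (t : ℝ) :
    laguerre n t = ∑ k ∈ range N, (n.choose k : ℝ) * (-t) ^ k / k ! := by
  refine sum_subset (range_subset_range.2 h) fun k _ hk => ?_
  rw [Nat.choose_eq_zero_of_lt (by simpa using hk), Nat.cast_zero, zero_mul, zero_div]

lemma mul_laguerre (n : ℕ) (t : ℝ) :
    t * laguerre n t
      = ∑ k ∈ range (n + 1), -((k + 1) * n.choose k : ℝ) * (-t) ^ (k + 1) / (k + 1)! := by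
  rw [laguerre, mul_sum]
  refine sum_congr rfl fun k _ => ?_
  rw [Nat.factorial_succ]
  push_cast
  field_simp
  ring

lemma choose_three_term (n k : ℕ) :
    (n + 2 : ℝ) * (n + 2).choose (k + 1) + (n + 1) * n.choose (k + 1)
      = (2 * n + 3) * (n + 1).choose (k + 1) + (k + 1) * (n + 1).choose k := by
  rcases le_or_gt k (n + 1) with hk | hk
  · have h : (n.choose k * (n + 1) : ℝ) = (n + 1).choose k * (n + 1 - k) := by
      exact_mod_cast Nat.choose_mul_succ_eq n k
    simp only [Nat.choose_succ_succ, Nat.cast_add]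
    linear_combination -h
  · rw [Nat.choose_eq_zero_of_lt (by omega : n + 2 < k + 1),
      Nat.choose_eq_zero_of_lt (by omega : n < k + 1),
      Nat.choose_eq_zero_of_lt (by omega : n + 1 < k + 1), Nat.choose_eq_zero_of_lt hk]
    simp

lemma mul_laguerre_succ (n : ℕ) (t : ℝ) :
    t * laguerre (n + 1) t
      = (2 * n + 3) * laguerre (n + 1) t - (n + 2) * laguerre (n + 2) t
        - (n + 1) * laguerre n t := by
  rw [mul_laguerre, laguerre_eq_sum_range (N := n + 3) (by omega) t,
    laguerre_eq_sum_range (N := n + 3) (by omega) t,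
    laguerre_eq_sum_range (N := n + 3) (by omega) t,
    mul_sum, mul_sum, mul_sum, ← sum_sub_distrib, ← sum_sub_distrib, sum_range_succ' _ (n + 2)]
  simp only [Nat.choose_zero_right, Nat.cast_one, pow_zero, Nat.factorial_zero, div_one, mul_one]
  rw [show (2 * n + 3 - (n + 2) - (n + 1) : ℝ) = 0 by ring, add_zero]
  refine sum_congr rfl fun k _ => ?_
  linear_combination ((-t) ^ (k + 1) / (k + 1)! : ℝ) * choose_three_term n k

lemma laguerreZ_natCast (n : ℕ) (t : ℝ) : laguerreZ n t = laguerre n t := by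
  simp [laguerreZ]

lemma laguerreZ_of_neg {m : ℤ} (hm : m < 0) (t : ℝ) : laguerreZ m t = 0 :=
  if_neg hm.not_ge

lemma mul_laguerreZ (m : ℤ) (t : ℝ) :
    t * laguerreZ m t
      = (2 * m + 1) * laguerreZ m t - (m + 1) * laguerreZ (m + 1) t - m * laguerreZ (m - 1) t := by
  rcases lt_trichotomy m (-1) with hm | rfl | hm
  · simp [laguerreZ_of_neg, hm.trans, (by omega : m + 1 < 0)]
  · simp [laguerreZ_of_neg]
  · obtain ⟨_ | n, rfl⟩ := Int.eq_ofNat_of_zero_le (by omega : 0 ≤ m)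
    · simp [laguerreZ, laguerre, sum_range_succ]
    · have h := mul_laguerre_succ n t
      rw [show ((n + 1 : ℕ) : ℤ) + 1 = (n + 2 : ℕ) by push_cast; ring,
        show ((n + 1 : ℕ) : ℤ) - 1 = n by push_cast; ring]
      simp only [laguerreZ_natCast]
      push_cast
      linear_combination h

lemma sum_Icc_neg_two_two {M : Type*} [AddCommMonoid M] (f : ℤ → M) :
    ∑ k ∈ Icc (-2 : ℤ) 2, f k = f (-2) + f (-1) + f 0 + f 1 + f 2 := by
  rw [show Icc (-2 : ℤ) 2 = {-2, -1, 0, 1, 2} by decide]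
  simp [add_assoc]

theorem t_sq_mul_laguerre (n : ℕ) (t : ℝ) :
    t ^ 2 * laguerre n t
      = ∑ k ∈ Finset.Icc (-2 : ℤ) 2, chiCoeff k n * laguerreZ ((n : ℤ) + k) t := by
  have hn := mul_laguerreZ n t
  have hsucc := mul_laguerreZ (n + 1) t
  have hpred := mul_laguerreZ (n - 1) t
  rw [sum_Icc_neg_two_two, ← laguerreZ_natCast]
  simp only [chiCoeff, Int.reduceNeg, Int.reduceEq, ↓reduceIte, add_zero, ← sub_eq_add_neg]
  push_cast [add_sub_cancel_right, sub_add_cancel, sub_sub, add_assoc, one_add_one_eq_two]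
    at hn hsucc hpred ⊢
  linear_combination (t + 2 * n + 1) * hn - (n + 1) * hsucc - n * hpred
end

section
/- Let \kappa > 0 and suppose v : [0,\infty) \to \mathbb{R} is continuous, v(0) = 0, and v has at most polynomial growth, and suppose the Laguerre coefficients v_n = \int_0^\infty e^{-\kappa t} L_n(\kappa t) v(t) dt vanish for all n \geq 0. Then v = 0 on [0,\infty). -/
/-!
Write `F(s) = ∫₀^∞ e^{-st} v(t) dt` for the Laplace transform of `v`. Since `L_n(κt)` is a
triangular combination of the monomials `(κt)^j` with nonzero diagonal, the vanishing of the
Laguerre coefficients says that all moments `∫₀^∞ t^k e^{-κt} v(t) dt` vanish, and these are (up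
to the factor `(-1)^k / k!`) the Taylor coefficients of `F` at `κ`. Expanding `e^{-ut}` and using
dominated convergence, polynomial growth makes `F` real-analytic on `(0, ∞)`, so `F = 0` there.
Finally, under `x = e^{-t}` the values `F(m + 2)` are the moments on `[0, 1]` of
`x ↦ x v(-log x)`, which is continuous on `[0, 1]` by polynomial growth, so it vanishes by
Weierstrass approximation.
-/

open Real MeasureTheory

open Set Filter Topology
open scoped Nat

noncomputable def laplace (v : ℝ → ℝ) (s : ℝ) : ℝ :=
  ∫ t in Ioi 0, exp (-s * t) * v t

lemma tendsto_one_add_rpow_mul_exp_neg_mul_atTop (p : ℝ) {b : ℝ} (hb : 0 < b) :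
    Tendsto (fun t => (1 + t) ^ p * exp (-b * t)) atTop (𝓝 0) := by
  have h := ((tendsto_rpow_mul_exp_neg_mul_atTop_nhds_zero p b hb).comp
    (tendsto_atTop_add_const_left _ 1 tendsto_id)).const_mul (exp b)
  rw [mul_zero] at h
  refine h.congr fun t => ?_
  simp only [Function.comp_apply, id]
  rw [mul_left_comm, ← exp_add]
  ring_nf

lemma integrableOn_one_add_rpow_mul_exp_neg_mul (p : ℝ) {b : ℝ} (hb : 0 < b) :
    IntegrableOn (fun t => (1 + t) ^ p * exp (-b * t)) (Ioi 0) := by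
  refine integrable_of_isBigO_exp_neg (half_pos hb) ?_ ?_
  · refine ContinuousOn.mul (fun t ht => ?_) (by fun_prop)
    have : 1 + t ≠ 0 := by linarith [mem_Ici.1 ht]
    exact ((continuous_const.add continuous_id).continuousAt.rpow_const
      (Or.inl this)).continuousWithinAt
  · have h := ((tendsto_one_add_rpow_mul_exp_neg_mul_atTop p (half_pos hb)).isBigO_one ℝ).mul
      (Asymptotics.isBigO_refl (fun t => exp (-(b / 2) * t)) atTop)
    refine (h.congr_left fun t => ?_).congr_right fun t => one_mul _
    rw [mul_assoc, ← exp_add]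
    ring_nf

lemma Real.hasSum_pow_div_factorial (x : ℝ) : HasSum (fun n => x ^ n / n !) (exp x) := by
  rw [Real.exp_eq_exp_ℝ]
  exact NormedSpace.expSeries_div_hasSum_exp x

lemma analyticAt_of_forall_hasSum_mul_pow {f : ℝ → ℝ} {c : ℕ → ℝ} {x r : ℝ} (hr : 0 < r)
    (hf : ∀ u, |u| < r → HasSum (fun n => c n * u ^ n) (f (x + u))) : AnalyticAt ℝ f x := by
  set ρ : NNReal := ⟨r / 2, (half_pos hr).le⟩
  have hρ : |(ρ : ℝ)| < r := by
    change |r / 2| < r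
    rw [abs_of_pos (half_pos hr)]; linarith
  refine ⟨.ofScalars ℝ c, ρ,
    ⟨?_, ENNReal.coe_pos.2 (NNReal.coe_pos.1 (half_pos hr)), fun {y} hy => ?_⟩⟩
  · refine FormalMultilinearSeries.le_radius_of_summable_norm _ ?_
    refine ((hf _ hρ).summable.abs).congr fun n => ?_
    rw [FormalMultilinearSeries.ofScalars_norm, abs_mul, abs_pow, Real.norm_eq_abs,
      NNReal.abs_eq]
  · have hy : |y| < ρ := by simpa using hy
    replace hy : |y| < r := by linarith [show (ρ : ℝ) = r / 2 from rfl]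
    simpa [FormalMultilinearSeries.ofScalars_apply_eq, mul_comm] using hf y hy

lemma integral_Ioo_zero_one_eq_integral_Ioi_exp_neg {E : Type*} [NormedAddCommGroup E]
    [NormedSpace ℝ E] (g : ℝ → E) :
    ∫ x in Ioo 0 1, g x = ∫ t in Ioi 0, exp (-t) • g (exp (-t)) := by
  have himage : (fun t => exp (-t)) '' Ioi 0 = Ioo 0 1 := by
    rw [← exp_zero, ← image_exp_Iio, show Iio (0 : ℝ) = Neg.neg '' Ioi 0 by simp, image_image]
  have hderiv : ∀ t ∈ Ioi (0 : ℝ), HasDerivWithinAt (fun t => exp (-t)) (-exp (-t)) (Ioi 0) t :=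
    fun t _ => by simpa using (hasDerivAt_neg t).exp.hasDerivWithinAt
  have hinj : InjOn (fun t => exp (-t)) (Ioi 0) :=
    fun a _ b _ h => neg_injective (exp_injective h)
  rw [← himage, integral_image_eq_integral_abs_deriv_smul measurableSet_Ioi hderiv hinj]
  simp_rw [abs_neg, abs_of_pos (exp_pos _)]

lemma eqOn_zero_of_integral_pow_mul_eq_zero {h : ℝ → ℝ} {a b : ℝ} (hab : a ≠ b)
    (hc : ContinuousOn h (Icc a b)) (hmom : ∀ n : ℕ, ∫ x in Icc a b, x ^ n * h x = 0) :
    EqOn h 0 (Icc a b) := by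
  have hmul {f : ℝ → ℝ} (hf : ContinuousOn f (Icc a b)) :
      IntegrableOn (fun x => f x * h x) (Icc a b) :=
    (hf.mul hc).integrableOn_Icc
  have hpoly (P : Polynomial ℝ) : ∫ x in Icc a b, P.eval x * h x = 0 := by
    simp_rw [Polynomial.eval_eq_sum_range, Finset.sum_mul, mul_assoc]
    rw [integral_finsetSum _ fun i _ => (hmul (continuousOn_pow i)).const_mul _]
    simp [integral_const_mul, hmom]
  have hsq : ∫ x in Icc a b, h x * h x ≤ 0 := by
    refine le_of_forall_pos_le_add fun ε hε => ?_
    set I := ∫ x in Icc a b, |h x|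
    have hI : 0 ≤ I := setIntegral_nonneg measurableSet_Icc fun x _ => abs_nonneg _
    obtain ⟨P, hP⟩ := exists_polynomial_near_of_continuousOn a b h hc (ε / (I + 1)) (by positivity)
    have hPc : ContinuousOn (fun x => P.eval x) (Icc a b) := P.continuousOn
    have herr : IntegrableOn (fun x => h x * (h x - P.eval x)) (Icc a b) :=
      (hc.mul (hc.sub hPc)).integrableOn_Icc
    calc ∫ x in Icc a b, h x * h x
        = ∫ x in Icc a b, h x * (h x - P.eval x) + P.eval x * h x := by simp_rw [mul_sub]; ring_nf
      _ = ∫ x in Icc a b, h x * (h x - P.eval x) := by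
        rw [integral_add herr (hmul hPc), hpoly, add_zero]
      _ ≤ ∫ x in Icc a b, |h x| * (ε / (I + 1)) := by
        refine setIntegral_mono_on herr (hc.abs.integrableOn_Icc.mul_const _) measurableSet_Icc
          fun x hx => (le_abs_self _).trans ?_
        rw [abs_mul]
        gcongr
        exact ((abs_sub_comm _ _).trans_lt (hP x hx)).le
      _ = I * (ε / (I + 1)) := integral_mul_const _ _
      _ ≤ 0 + ε := by
        rw [zero_add, mul_div_assoc', div_le_iff₀ (by positivity)]
        nlinarith
  have hzero : (fun x => h x * h x) =ᵐ[volume.restrict (Icc a b)] 0 :=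
    (integral_eq_zero_iff_of_nonneg (fun x => mul_self_nonneg (h x))
      (hc.mul hc).integrableOn_Icc).1
      (le_antisymm hsq (setIntegral_nonneg measurableSet_Icc fun x _ => mul_self_nonneg _))
  intro x hx
  exact mul_self_eq_zero.1
    (Measure.eqOn_Icc_of_ae_eq volume hab hzero (hc.mul hc) continuousOn_const hx)

section Laguerre

variable {v : ℝ → ℝ} {κ : ℝ}

lemma laplace_laguerre_mul
    (hint : ∀ k : ℕ, IntegrableOn (fun t => exp (-κ * t) * (t ^ k * v t)) (Ioi 0)) (n : ℕ) :
    laplace (fun t => laguerre n (κ * t) * v t) κ =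
      ∑ j ∈ Finset.range (n + 1),
        n.choose j * (-κ) ^ j / j ! * laplace (fun t => t ^ j * v t) κ := by
  simp_rw [laplace, ← integral_const_mul]
  rw [← integral_finsetSum _ fun j _ => (hint j).const_mul _]
  congr 1 with t
  simp_rw [laguerre, Finset.sum_mul, Finset.mul_sum]
  refine Finset.sum_congr rfl fun j _ => ?_
  rw [neg_mul_eq_neg_mul, mul_pow]
  ring

lemma laplace_pow_mul_eq_zero_of_laplace_laguerre_mul_eq_zero (hκ : κ ≠ 0)
    (hint : ∀ k : ℕ, IntegrableOn (fun t => exp (-κ * t) * (t ^ k * v t)) (Ioi 0))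
    (hcoeff : ∀ n : ℕ, laplace (fun t => laguerre n (κ * t) * v t) κ = 0) (k : ℕ) :
    laplace (fun t => t ^ k * v t) κ = 0 := by
  induction k using Nat.strong_induction_on with
  | _ k ih =>
    have h := hcoeff k
    rw [laplace_laguerre_mul hint, Finset.sum_range_succ,
      Finset.sum_eq_zero fun j hj => by rw [ih j (Finset.mem_range.1 hj), mul_zero],
      zero_add, Nat.choose_self] at h
    simpa [hκ, Nat.factorial_ne_zero] using h

end Laguerre

section PolynomialGrowth

variable {v : ℝ → ℝ} {C p : ℝ}

lemma integrableOn_exp_neg_mul_mul (hv : Measurable v)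
    (hgrowth : ∀ t, 0 ≤ t → |v t| ≤ C * (1 + t) ^ p) {s : ℝ} (hs : 0 < s) :
    IntegrableOn (fun t => exp (-s * t) * v t) (Ioi 0) := by
  refine ((integrableOn_one_add_rpow_mul_exp_neg_mul p hs).const_mul C).mono'
    (by fun_prop : Measurable fun t => exp (-s * t) * v t).aestronglyMeasurable ?_
  filter_upwards [ae_restrict_mem measurableSet_Ioi] with t ht
  rw [norm_mul, norm_of_nonneg (exp_pos _).le, norm_eq_abs]
  calc exp (-s * t) * |v t| ≤ exp (-s * t) * (C * (1 + t) ^ p) := by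
        gcongr; exact hgrowth t (le_of_lt ht)
    _ = C * ((1 + t) ^ p * exp (-s * t)) := by ring

lemma abs_pow_mul_le (hgrowth : ∀ t, 0 ≤ t → |v t| ≤ C * (1 + t) ^ p) (k : ℕ) {t : ℝ}
    (ht : 0 ≤ t) : |t ^ k * v t| ≤ C * (1 + t) ^ (p + k) := by
  rw [abs_mul, abs_of_nonneg (pow_nonneg ht k), rpow_add (by linarith), rpow_natCast]
  calc t ^ k * |v t| ≤ (1 + t) ^ k * (C * (1 + t) ^ p) :=
        mul_le_mul (pow_le_pow_left₀ ht (by linarith) k) (hgrowth t ht) (abs_nonneg _)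
          (by positivity)
    _ = C * ((1 + t) ^ p * (1 + t) ^ k) := by ring

lemma hasSum_laplace (hv : Measurable v) (hgrowth : ∀ t, 0 ≤ t → |v t| ≤ C * (1 + t) ^ p)
    {s u : ℝ} (hu : |u| < s) :
    HasSum (fun k : ℕ => (-u) ^ k / k ! * laplace (fun t => t ^ k * v t) s)
      (laplace v (s + u)) := by
  simp_rw [laplace, ← integral_const_mul]
  refine hasSum_integral_of_dominated_convergence
    (fun k t => |u * t| ^ k / k ! * ‖exp (-s * t) * v t‖) (fun k => by fun_prop)
    (fun k => ae_of_all _ fun t => le_of_eq ?_) (ae_of_all _ fun t => ?_) ?_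
    (ae_of_all _ fun t => ?_)
  · simp only [norm_mul, norm_div, norm_pow, norm_neg, Real.norm_eq_abs, abs_mul, Nat.abs_cast]
    ring
  · exact (Real.summable_pow_div_factorial _).mul_right _
  · refine (integrableOn_exp_neg_mul_mul hv hgrowth (sub_pos.2 hu)).norm.congr ?_
    filter_upwards [ae_restrict_mem measurableSet_Ioi] with t ht
    rw [((hasSum_pow_div_factorial _).mul_right _).tsum_eq, norm_mul, norm_mul,
      Real.norm_of_nonneg (exp_pos _).le, Real.norm_of_nonneg (exp_pos _).le, abs_mul,
      abs_of_pos (show (0 : ℝ) < t from ht), ← mul_assoc, ← exp_add]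
    ring_nf
  · rw [show -(s + u) * t = -u * t + -s * t by ring, exp_add, mul_assoc]
    refine ((hasSum_pow_div_factorial (-u * t)).mul_right (exp (-s * t) * v t)).congr_fun
      fun k => ?_
    rw [mul_pow]
    ring

lemma analyticOnNhd_laplace (hv : Measurable v)
    (hgrowth : ∀ t, 0 ≤ t → |v t| ≤ C * (1 + t) ^ p) : AnalyticOnNhd ℝ (laplace v) (Ioi 0) :=
  fun s hs => analyticAt_of_forall_hasSum_mul_pow (c := fun k =>
      (-1) ^ k / k ! * laplace (fun t => t ^ k * v t) s) hs fun u hu =>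
    (hasSum_laplace hv hgrowth hu).congr_fun fun k => by rw [neg_pow']; ring

lemma laplace_eqOn_zero_of_laplace_pow_mul_eq_zero (hv : Measurable v)
    (hgrowth : ∀ t, 0 ≤ t → |v t| ≤ C * (1 + t) ^ p) {κ : ℝ} (hκ : 0 < κ)
    (hmom : ∀ k : ℕ, laplace (fun t => t ^ k * v t) κ = 0) : EqOn (laplace v) 0 (Ioi 0) := by
  refine (analyticOnNhd_laplace hv hgrowth).eqOn_zero_of_preconnected_of_eventuallyEq_zero
    isPreconnected_Ioi hκ ?_
  filter_upwards [Metric.ball_mem_nhds κ hκ] with s hs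
  have h := hasSum_laplace hv hgrowth (u := s - κ) (by rwa [← Real.dist_eq])
  simp only [hmom, mul_zero, add_sub_cancel] at h
  exact h.unique hasSum_zero

lemma continuousOn_mul_comp_neg_log (hv : Continuous v)
    (hgrowth : ∀ t, 0 ≤ t → |v t| ≤ C * (1 + t) ^ p) :
    ContinuousOn (fun x => x * v (-log x)) (Icc 0 1) := by
  intro x hx
  rcases hx.1.eq_or_lt with rfl | hx0
  · refine (continuousWithinAt_Ioi_iff_Ici.1 ?_).mono fun y hy => hy.1
    have hlim : Tendsto (fun x => C * ((1 + -log x) ^ p * exp (-1 * -log x))) (𝓝[>] 0)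
        (𝓝 0) := by
      simpa using ((tendsto_one_add_rpow_mul_exp_neg_mul_atTop p one_pos).comp
        (tendsto_neg_atBot_atTop.comp tendsto_log_nhdsGT_zero)).const_mul C
    rw [ContinuousWithinAt, zero_mul]
    refine squeeze_zero_norm' ?_ hlim
    filter_upwards [Ioo_mem_nhdsGT one_pos] with y hy
    rw [norm_mul, Real.norm_of_nonneg hy.1.le, Real.norm_eq_abs,
      show -1 * -log y = log y by ring, exp_log hy.1]
    calc y * |v (-log y)| ≤ y * (C * (1 + -log y) ^ p) := by
          gcongr
          · exact hy.1.le
          · exact hgrowth _ (neg_nonneg.2 (log_nonpos hy.1.le hy.2.le))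
      _ = C * ((1 + -log y) ^ p * y) := by ring
  · exact (continuousAt_id.mul
      (hv.continuousAt.comp (continuousAt_log hx0.ne').neg)).continuousWithinAt

lemma eqOn_zero_of_laplace_nat_add_two_eq_zero (hv : Continuous v)
    (hgrowth : ∀ t, 0 ≤ t → |v t| ≤ C * (1 + t) ^ p) (hL : ∀ n : ℕ, laplace v (n + 2) = 0) :
    EqOn v 0 (Ici 0) := by
  have hmom (m : ℕ) : ∫ x in Icc (0 : ℝ) 1, x ^ m * (x * v (-log x)) = 0 := by
    refine Eq.trans ?_ (hL m)
    rw [integral_Icc_eq_integral_Ioo, integral_Ioo_zero_one_eq_integral_Ioi_exp_neg, laplace]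
    refine setIntegral_congr_fun measurableSet_Ioi fun t _ => ?_
    rw [smul_eq_mul, log_exp, neg_neg, ← exp_nat_mul, mul_left_comm, ← mul_assoc, ← mul_assoc,
      ← exp_add, ← exp_add]
    ring_nf
  intro t ht
  have h := eqOn_zero_of_integral_pow_mul_eq_zero zero_ne_one
    (continuousOn_mul_comp_neg_log hv hgrowth) hmom
    ⟨(exp_pos (-t)).le, exp_le_one_iff.2 (neg_nonpos.2 ht)⟩
  simpa [exp_ne_zero] using h

end PolynomialGrowth

theorem laguerre_coeffs_vanish_imp_zero_general (κ : ℝ) (hκ : 0 < κ) (v : ℝ → ℝ)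
    (hv : Continuous v)
    (hgrowth : ∃ C p : ℝ, ∀ t : ℝ, 0 ≤ t → |v t| ≤ C * (1 + t) ^ p)
    (hcoeff : ∀ n : ℕ,
      ∫ t in Set.Ioi (0 : ℝ), Real.exp (-κ * t) * laguerre n (κ * t) * v t = 0) :
    ∀ t : ℝ, 0 ≤ t → v t = 0 := by
  obtain ⟨C, p, hgrowth⟩ := hgrowth
  have hmom : ∀ k : ℕ, laplace (fun t => t ^ k * v t) κ = 0 :=
    laplace_pow_mul_eq_zero_of_laplace_laguerre_mul_eq_zero hκ.ne'
      (fun k => integrableOn_exp_neg_mul_mul (by fun_prop)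
        (fun t ht => abs_pow_mul_le hgrowth k ht) hκ)
      (fun n => by simpa only [laplace, mul_assoc] using hcoeff n)
  have hL := laplace_eqOn_zero_of_laplace_pow_mul_eq_zero hv.measurable hgrowth hκ hmom
  exact fun t ht => eqOn_zero_of_laplace_nat_add_two_eq_zero hv hgrowth
    (fun n => hL (by positivity : (0 : ℝ) < n + 2)) ht

theorem laguerre_coeffs_vanish_imp_zero (κ : ℝ) (hκ : 0 < κ) (v : ℝ → ℝ)
    (hv : Continuous v) (hv0 : v 0 = 0)
    (hgrowth : ∃ C p : ℝ, ∀ t : ℝ, 0 ≤ t → |v t| ≤ C * (1 + t) ^ p)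
    (hcoeff : ∀ n : ℕ,
      ∫ t in Set.Ioi (0 : ℝ), Real.exp (-κ * t) * laguerre n (κ * t) * v t = 0) :
    ∀ t : ℝ, 0 ≤ t → v t = 0 :=
  laguerre_coeffs_vanish_imp_zero_general κ hκ v hv hgrowth hcoeff
end
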